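/- Let p be a probability vector on F_2^2 with all entries positive, H(p) < 1, and Δ = log₂(max p_x) − log₂(min p_x) > 0. For m ∈ (F_2^2)^N set q_m = ∏ p_{m_n} ≅ q on F_2^{2N}. Suppose a subspace C ⊆ F_2^{2N} of dimension N is chosen uniformly at random among symplectic self-dual subspaces, and define the failure event weight F(C) = ∑_{m ∈ T(ε)} q_m · 1[∃ m' ≠ m : q_{m'} ≥ q_m and m + m' ∈ C]. Then for any ε > 0, E[F(C)] < 2^{N(H(p)+ε−1)}, using that Pr[c ∈ C] = 1/(2^N+1) < 2^{−N} for each fixed nonzero c and that |T(ε)| < 2^{N(H(p)+ε)} with q_m > 2^{−N(H(p)+ε)} on T(ε). -/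

import Mathlib

/-- `F_2^{2N}`, grouped into `N` blocks of two coordinates. -/
abbrev V (N : ℕ) := Fin N → ZMod 2 × ZMod 2

/-- The standard symplectic product `u ⊙ v = uᵀ P v` on `F_2^{2N}`, where `P` is
block-diagonal with `N` antidiagonal `2×2` blocks. -/
def symp {N : ℕ} (u v : V N) : ZMod 2 :=
  ∑ n, ((u n).1 * (v n).2 + (u n).2 * (v n).1)

/-- The symplectic dual `C^⊥ = {u : ∀ v ∈ C, u ⊙ v = 0}` of a subspace `C ⊆ F_2^{2N}`. -/
def sympDual {N : ℕ} (C : Submodule (ZMod 2) (V N)) : Submodule (ZMod 2) (V N) where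
  carrier := {u | ∀ v ∈ C, symp u v = 0}
  zero_mem' := by intro v hv; simp [symp]
  add_mem' := by
    intro a b ha hb v hv
    have h : symp (a + b) v = symp a v + symp b v := by
      simp only [symp, ← Finset.sum_add_distrib]
      refine Finset.sum_congr rfl fun n _ => ?_
      simp [Prod.fst_add, Prod.snd_add]; ring
    rw [h, ha v hv, hb v hv, add_zero]
  smul_mem' := by
    intro c u hu v hv
    have h : symp (c • u) v = c * symp u v := by
      simp only [symp, Finset.mul_sum]
      refine Finset.sum_congr rfl fun n _ => ?_
      simp [Prod.smul_fst, Prod.smul_snd, smul_eq_mul]; ring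
    rw [h, hu v hv, mul_zero]


open scoped Classical

/-- The four-element index set `F_2^2` of the Bell basis. -/
abbrev F4 := ZMod 2 × ZMod 2

/-- The base-2 entropy `H(p) = -∑_x p_x log₂ p_x` of a probability vector on `F_2^2`. -/
noncomputable def H4 (p : F4 → ℝ) : ℝ := -∑ x, p x * Real.logb 2 (p x)

/-- The product probability `q_m = ∏_n p_{m_n}` on `(F_2^2)^N`. -/
def qprod {N : ℕ} (p : F4 → ℝ) (m : Fin N → F4) : ℝ := ∏ n, p (m n)

/-- The typical set `T(ε) = {m : |−(1/N) log₂ q_m − H(p)| < ε}`. -/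
noncomputable def typFinset (N : ℕ) (p : F4 → ℝ) (ε : ℝ) : Finset (Fin N → F4) :=
  Finset.univ.filter fun m =>
    |(-(1 / N : ℝ)) * Real.logb 2 (qprod p m) - H4 p| < ε

/-- `Δ = log₂(max_x p_x) − log₂(min_x p_x)`. -/
noncomputable def Δ4 (p : F4 → ℝ) : ℝ :=
  Real.logb 2 (Finset.univ.sup' Finset.univ_nonempty p) -
    Real.logb 2 (Finset.univ.inf' Finset.univ_nonempty p)

instance (N : ℕ) : Finite (Submodule (ZMod 2) (V N)) :=
  Finite.of_injective (fun C => (C : Set (V N))) SetLike.coe_injective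

noncomputable instance (N : ℕ) :
    Fintype {C : Submodule (ZMod 2) (V N) // C = sympDual C} :=
  Fintype.ofFinite _

/-!
Union bound: `F(C) ≤ ∑_{m ∈ T} ∑_{m' ≠ m, q_m ≤ q_{m'}} q_m · 1[m + m' ∈ C]`.
Symplectic maps permute the self-dual subspaces, and the symplectic group of `F_2^{2N}` is
transitive on nonzero vectors (at most two transvections `x ↦ x + (v ⊙ x) v` take `c` to `d`),
so `Pr[c ∈ C]` is the same for all `c ≠ 0`. Counting pairs `(c, C)` with `c ∈ C`, where
`|C| = 2^N`, gives `Pr[c ∈ C] = 1/(2^N + 1)`. As at most `1/q_m` messages have `q_{m'} ≥ q_m`,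
each `m` contributes at most `2^{-N}`, and `|T(ε)| < 2^{N(H(p)+ε)}` because
`q_m > 2^{-N(H(p)+ε)}` on `T(ε)`.
-/

open Finset

section Symplectic

variable {N : ℕ}

lemma symp_comm (u v : V N) : symp u v = symp v u :=
  sum_congr rfl fun _ _ => by ring

lemma symp_add_left (a b v : V N) : symp (a + b) v = symp a v + symp b v := by
  simp only [symp, ← sum_add_distrib, Pi.add_apply, Prod.fst_add, Prod.snd_add]
  exact sum_congr rfl fun _ _ => by ring

lemma symp_smul_left (c : ZMod 2) (a v : V N) : symp (c • a) v = c * symp a v := by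
  simp only [symp, mul_sum, Pi.smul_apply, Prod.smul_fst, Prod.smul_snd, smul_eq_mul]
  exact sum_congr rfl fun _ _ => by ring

def sympForm (N : ℕ) : LinearMap.BilinForm (ZMod 2) (V N) :=
  LinearMap.mk₂ (ZMod 2) symp symp_add_left symp_smul_left
    (fun v a b => by rw [symp_comm, symp_add_left, symp_comm a, symp_comm b])
    (fun c v a => by rw [symp_comm, symp_smul_left, symp_comm a, smul_eq_mul])

@[simp] lemma sympForm_apply (u v : V N) : sympForm N u v = symp u v := rfl

lemma symp_self (v : V N) : symp v v = 0 :=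
  sum_eq_zero fun _ _ => by rw [mul_comm (v _).2]; exact CharTwo.add_self_eq_zero _

lemma exists_symp_eq_one {u : V N} (hu : u ≠ 0) : ∃ v, symp u v = 1 := by
  obtain ⟨n, hn⟩ := Function.ne_iff.mp hu
  obtain ⟨w, hw⟩ :=
    (by decide : ∀ z : F4, z ≠ 0 → ∃ w : F4, z.1 * w.2 + z.2 * w.1 = 1) _ hn
  refine ⟨Pi.single n w, ?_⟩
  rw [symp, sum_eq_single n (fun b _ hb => by simp [hb]) (by simp)]
  simpa using hw

lemma sympForm_isRefl : (sympForm N).IsRefl := fun x y h => by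
  rwa [sympForm_apply, symp_comm] at h

lemma sympForm_nondegenerate : (sympForm N).Nondegenerate := by
  refine sympForm_isRefl.nondegenerate_iff_separatingLeft.mpr fun u hu => ?_
  by_contra h
  obtain ⟨v, hv⟩ := exists_symp_eq_one h
  exact one_ne_zero (hv.symm.trans (hu v))

lemma sympDual_eq_orthogonal (C : Submodule (ZMod 2) (V N)) :
    sympDual C = (sympForm N).orthogonal C := by
  ext u
  exact forall₂_congr fun v _ => by rw [sympForm_apply, symp_comm]

lemma finrank_of_eq_sympDual {C : Submodule (ZMod 2) (V N)} (hC : C = sympDual C) :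
    Module.finrank (ZMod 2) C = N := by
  have h := LinearMap.BilinForm.finrank_orthogonal sympForm_nondegenerate C
  rw [← sympDual_eq_orthogonal, ← hC] at h
  simp only [Module.finrank_pi_fintype, Module.finrank_prod, Module.finrank_self,
    sum_const, card_univ, Fintype.card_fin, smul_eq_mul] at h
  omega

def sympTransvection (v : V N) : V N ≃ₗ[ZMod 2] V N :=
  LinearEquiv.transvection (f := sympForm N v) (symp_self v)

lemma sympTransvection_apply (v x : V N) : sympTransvection v x = x + symp v x • v := rfl

lemma symp_sympTransvection (v x y : V N) :
    symp (sympTransvection v x) (sympTransvection v y) = symp x y := by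
  simp only [sympTransvection_apply, ← sympForm_apply, map_add, map_smul, LinearMap.add_apply,
    LinearMap.smul_apply, smul_eq_mul]
  simp only [sympForm_apply, symp_self, symp_comm x v]
  linear_combination CharTwo.add_self_eq_zero (symp v x * symp v y)

lemma sympTransvection_add_apply {u w : V N} (h : symp u w = 1) :
    sympTransvection (u + w) u = w := by
  rw [sympTransvection_apply, symp_add_left, symp_self, zero_add, symp_comm, h, one_smul,
    ← add_assoc, ZModModule.add_self, zero_add]

lemma exists_symp_eq_one_and_eq_one {c d : V N} (hc : c ≠ 0) (hd : d ≠ 0) :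
    ∃ v, symp c v = 1 ∧ symp d v = 1 := by
  obtain ⟨a, ha⟩ := exists_symp_eq_one hc
  obtain ⟨b, hb⟩ := exists_symp_eq_one hd
  have h01 (t : ZMod 2) : t = 0 ∨ t = 1 := by revert t; decide
  rcases h01 (symp d a) with hda | hda
  · rcases h01 (symp c b) with hcb | hcb
    · exact ⟨a + b,
        by rw [symp_comm, symp_add_left, symp_comm a, symp_comm b, ha, hcb, add_zero],
        by rw [symp_comm, symp_add_left, symp_comm a, symp_comm b, hda, hb, zero_add]⟩
    · exact ⟨b, hcb, hb⟩
  · exact ⟨a, ha, hda⟩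

theorem exists_symp_preserving_apply_eq {c d : V N} (hc : c ≠ 0) (hd : d ≠ 0) :
    ∃ g : V N ≃ₗ[ZMod 2] V N, (∀ x y, symp (g x) (g y) = symp x y) ∧ g c = d := by
  obtain ⟨v, hcv, hvd⟩ := exists_symp_eq_one_and_eq_one hc hd
  refine ⟨(sympTransvection (c + v)).trans (sympTransvection (v + d)), fun x y => ?_, ?_⟩
  · simp only [LinearEquiv.trans_apply, symp_sympTransvection]
  · rw [LinearEquiv.trans_apply, sympTransvection_add_apply hcv,
      sympTransvection_add_apply (by rwa [symp_comm])]

lemma map_sympDual (g : V N ≃ₗ[ZMod 2] V N) (hg : ∀ x y, symp (g x) (g y) = symp x y)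
    (C : Submodule (ZMod 2) (V N)) :
    (sympDual C).map (g : V N →ₗ[ZMod 2] V N) =
      sympDual (C.map (g : V N →ₗ[ZMod 2] V N)) := by
  ext u
  constructor
  · rintro ⟨w, hw, rfl⟩ _ ⟨v, hv, rfl⟩
    simpa only [LinearEquiv.coe_coe, hg] using hw v hv
  · refine fun h => ⟨g.symm u, fun v hv => ?_, g.apply_symm_apply u⟩
    have huv : symp u (g v) = 0 := h (g v) ⟨v, hv, rfl⟩
    rwa [← g.apply_symm_apply u, hg] at huv

end Symplectic

abbrev SelfDual (N : ℕ) := {C : Submodule (ZMod 2) (V N) // C = sympDual C}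

section Counting

variable {N : ℕ} {c : V N}

def SelfDual.mapEquiv (g : V N ≃ₗ[ZMod 2] V N)
    (hg : ∀ x y, symp (g x) (g y) = symp x y) : SelfDual N ≃ SelfDual N where
  toFun C := ⟨C.1.map (g : V N →ₗ[ZMod 2] V N), by
    conv_lhs => rw [C.2]
    exact map_sympDual g hg C.1⟩
  invFun C := ⟨C.1.map (g.symm : V N →ₗ[ZMod 2] V N), by
    conv_lhs => rw [C.2]
    refine map_sympDual g.symm (fun x y => ?_) C.1
    rw [← hg, g.apply_symm_apply, g.apply_symm_apply]⟩
  left_inv C := Subtype.ext <| by ext; simp [Submodule.mem_map_equiv]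
  right_inv C := Subtype.ext <| by ext; simp [Submodule.mem_map_equiv]

noncomputable def numSelfDualContaining (c : V N) : ℕ := #{C : SelfDual N | c ∈ C.1}

lemma numSelfDualContaining_eq {d : V N} (hc : c ≠ 0) (hd : d ≠ 0) :
    numSelfDualContaining c = numSelfDualContaining d := by
  obtain ⟨g, hg, rfl⟩ := exists_symp_preserving_apply_eq hc hd
  refine card_equiv (SelfDual.mapEquiv g hg) fun C => ?_
  simp [SelfDual.mapEquiv, Submodule.mem_map_equiv]

lemma card_mem_selfDual (C : SelfDual N) : #{c : V N | c ∈ C.1} = 2 ^ N := by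
  rw [← Fintype.card_subtype, Module.card_eq_pow_finrank (K := ZMod 2), ZMod.card,
    finrank_of_eq_sympDual C.2]

lemma sum_numSelfDualContaining :
    ∑ c : V N, numSelfDualContaining c = Fintype.card (SelfDual N) * 2 ^ N := by
  simp only [numSelfDualContaining, card_filter]
  rw [sum_comm]
  simp [card_mem_selfDual]

theorem numSelfDualContaining_mul (hc : c ≠ 0) :
    numSelfDualContaining c * (2 ^ N + 1) = Fintype.card (SelfDual N) := by
  have hN : N ≠ 0 := by
    rintro rfl
    exact hc (Subsingleton.elim _ _)
  have ha : 2 ≤ 2 ^ N := Nat.le_self_pow hN 2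
  have hcard : #(univ.erase (0 : V N)) + 1 = 2 ^ N * 2 ^ N := by
    rw [card_erase_add_one (mem_univ _), card_univ]
    simp [← mul_pow]
  have hsum := sum_numSelfDualContaining (N := N)
  rw [← add_sum_erase _ _ (mem_univ 0),
    sum_congr rfl fun d hd => numSelfDualContaining_eq (ne_of_mem_erase hd) hc,
    sum_const, smul_eq_mul] at hsum
  have hzero : numSelfDualContaining (0 : V N) = Fintype.card (SelfDual N) := by
    simp [numSelfDualContaining]
  rw [hzero] at hsum
  apply Nat.eq_of_mul_eq_mul_left (show 0 < 2 ^ N - 1 by omega)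
  zify [show 1 ≤ 2 ^ N by omega] at hcard hsum ⊢
  linear_combination hsum - (numSelfDualContaining c : ℤ) * hcard

end Counting

section Failure

variable {N : ℕ}

/-- The failure weight `F(C)`, with `q_m` and `T(ε)` replaced by any weight `q` and message
set `s`. -/
noncomputable def failureWeight (q : V N → ℝ) (s : Finset (V N))
    (C : Submodule (ZMod 2) (V N)) : ℝ :=
  ∑ m ∈ s, if ∃ m', m' ≠ m ∧ q m ≤ q m' ∧ m + m' ∈ C then q m else 0

lemma failureWeight_le_sum (q : V N → ℝ) (hq : ∀ m, 0 ≤ q m) (s : Finset (V N))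
    (C : Submodule (ZMod 2) (V N)) :
    failureWeight q s C ≤
      ∑ m ∈ s, ∑ m' with m' ≠ m ∧ q m ≤ q m', if m + m' ∈ C then q m else 0 := by
  refine sum_le_sum fun m _ => ?_
  split_ifs with h
  · obtain ⟨m', hne, hle, hmem⟩ := h
    calc q m = if m + m' ∈ C then q m else 0 := (if_pos hmem).symm
      _ ≤ _ := single_le_sum (f := fun m' => if m + m' ∈ C then q m else 0)
          (fun _ _ => ite_nonneg (hq m) le_rfl) (mem_filter.mpr ⟨mem_univ _, hne, hle⟩)
  · exact sum_nonneg fun _ _ => ite_nonneg (hq m) le_rfl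

lemma sum_selfDual_sum_ite_le (q : V N → ℝ) (hq : ∀ m, 0 ≤ q m) (hq1 : ∑ m, q m ≤ 1)
    (m : V N) :
    ∑ C : SelfDual N, ∑ m' with m' ≠ m ∧ q m ≤ q m', (if m + m' ∈ C.1 then q m else 0)
      ≤ Fintype.card (SelfDual N) / 2 ^ N := by
  set S : Finset (V N) := {m' | m' ≠ m ∧ q m ≤ q m'}
  have hprob (m' : V N) (hm' : m' ∈ S) :
      ∑ C : SelfDual N, (if m + m' ∈ C.1 then q m else 0) ≤
        q m * (Fintype.card (SelfDual N) / 2 ^ N) := by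
    have hne : m + m' ≠ 0 := fun h =>
      (mem_filter.mp hm').2.1 (by rw [← sub_eq_zero, ZModModule.sub_eq_add, add_comm, h])
    have hle : (numSelfDualContaining (m + m') : ℝ) * 2 ^ N ≤ Fintype.card (SelfDual N) := by
      rw [← numSelfDualContaining_mul hne]
      exact_mod_cast Nat.mul_le_mul_left _ (Nat.le_succ _)
    rw [← sum_filter, sum_const, nsmul_eq_mul, mul_comm]
    exact mul_le_mul_of_nonneg_left ((le_div_iff₀ (by positivity)).mpr hle) (hq m)
  have hcount : #S * q m ≤ 1 := by
    rw [← nsmul_eq_mul]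
    calc #S • q m ≤ ∑ m' ∈ S, q m' :=
          card_nsmul_le_sum _ _ _ fun m' hm' => (mem_filter.mp hm').2.2
      _ ≤ ∑ m', q m' := sum_le_sum_of_subset_of_nonneg (subset_univ _) fun m' _ _ => hq m'
      _ ≤ 1 := hq1
  calc _ = ∑ m' ∈ S, ∑ C : SelfDual N, (if m + m' ∈ C.1 then q m else 0) := sum_comm
    _ ≤ ∑ m' ∈ S, q m * (Fintype.card (SelfDual N) / 2 ^ N) := sum_le_sum hprob
    _ = #S * q m * (Fintype.card (SelfDual N) / 2 ^ N) := by
        rw [sum_const, nsmul_eq_mul, mul_assoc]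
    _ ≤ Fintype.card (SelfDual N) / 2 ^ N :=
      mul_le_of_le_one_left (by positivity) hcount

theorem sum_failureWeight_le (q : V N → ℝ) (hq : ∀ m, 0 ≤ q m) (hq1 : ∑ m, q m ≤ 1)
    (s : Finset (V N)) :
    ∑ C : SelfDual N, failureWeight q s C.1 ≤ #s / 2 ^ N * Fintype.card (SelfDual N) :=
  calc _ ≤ ∑ C : SelfDual N, ∑ m ∈ s,
        ∑ m' with m' ≠ m ∧ q m ≤ q m', if m + m' ∈ C.1 then q m else 0 :=
        sum_le_sum fun C _ => failureWeight_le_sum q hq s C.1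
    _ = ∑ m ∈ s, ∑ C : SelfDual N,
        ∑ m' with m' ≠ m ∧ q m ≤ q m', if m + m' ∈ C.1 then q m else 0 := sum_comm
    _ ≤ ∑ m ∈ s, (Fintype.card (SelfDual N) / 2 ^ N : ℝ) :=
        sum_le_sum fun m _ => sum_selfDual_sum_ite_le q hq hq1 m
    _ = #s / 2 ^ N * Fintype.card (SelfDual N) := by rw [sum_const, nsmul_eq_mul]; ring

end Failure

section Typical

variable {N : ℕ} {p : F4 → ℝ}

lemma qprod_pos (hpos : ∀ x, 0 < p x) (m : Fin N → F4) : 0 < qprod p m :=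
  prod_pos fun _ _ => hpos _

lemma sum_qprod (p : F4 → ℝ) : ∑ m : Fin N → F4, qprod p m = (∑ x, p x) ^ N := by
  simp only [qprod, ← Fintype.prod_sum, prod_const, card_univ, Fintype.card_fin]

lemma two_rpow_neg_lt_qprod (hN : 0 < N) (hpos : ∀ x, 0 < p x) {ε : ℝ} {m : Fin N → F4}
    (hm : m ∈ typFinset N p ε) : (2 : ℝ) ^ (-(N * (H4 p + ε))) < qprod p m := by
  have hlt := (abs_lt.mp (mem_filter.mp hm).2).2
  rw [← Real.lt_logb_iff_rpow_lt one_lt_two (qprod_pos hpos m)]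
  have hN' : (0 : ℝ) < N := Nat.cast_pos.mpr hN
  field_simp at hlt
  nlinarith

theorem card_typFinset_lt (hN : 0 < N) (hpos : ∀ x, 0 < p x) (hsum : ∑ x, p x = 1) (ε : ℝ) :
    (#(typFinset N p ε) : ℝ) < 2 ^ (N * (H4 p + ε) : ℝ) := by
  rcases (typFinset N p ε).eq_empty_or_nonempty with hT | hT
  · rw [hT, card_empty, Nat.cast_zero]
    positivity
  have hmass : #(typFinset N p ε) * (2 : ℝ) ^ (-(N * (H4 p + ε))) < 1 :=
    calc _ = ∑ _m ∈ typFinset N p ε, (2 : ℝ) ^ (-(N * (H4 p + ε))) := by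
          rw [sum_const, nsmul_eq_mul]
      _ < ∑ m ∈ typFinset N p ε, qprod p m :=
          sum_lt_sum_of_nonempty hT fun _ hm => two_rpow_neg_lt_qprod hN hpos hm
      _ ≤ ∑ m, qprod p m :=
          sum_le_sum_of_subset_of_nonneg (subset_univ _) fun m _ _ => (qprod_pos hpos m).le
      _ = 1 := by rw [sum_qprod, hsum, one_pow]
  rwa [Real.rpow_neg zero_le_two, ← div_eq_mul_inv, div_lt_one (by positivity)] at hmass

end Typical

theorem stmt18_general (N : ℕ) (p : F4 → ℝ) (hpos : ∀ x, 0 < p x) (hsum : ∑ x, p x = 1)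
    (ε : ℝ) :
    (∑ C : {C : Submodule (ZMod 2) (V N) // C = sympDual C},
        ∑ m ∈ typFinset N p ε,
          (if ∃ m', m' ≠ m ∧ qprod p m ≤ qprod p m' ∧ m + m' ∈ C.1
            then qprod p m else 0)) /
      (Nat.card {C : Submodule (ZMod 2) (V N) // C = sympDual C} : ℝ) <
      (2 : ℝ) ^ ((N : ℝ) * (H4 p + ε - 1)) := by
  rcases N.eq_zero_or_pos with rfl | hN
  · have hF (C : SelfDual 0) : failureWeight (qprod p) (typFinset 0 p ε) C.1 = 0 :=
      sum_eq_zero fun _ _ => if_neg fun ⟨_, hne, _⟩ => hne (Subsingleton.elim _ _)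
    change (∑ C : SelfDual 0, failureWeight (qprod p) (typFinset 0 p ε) C.1) / _ < _
    simp [hF]
  have hq1 : ∑ m : V N, qprod p m ≤ 1 := by rw [sum_qprod, hsum, one_pow]
  calc _ ≤ (#(typFinset N p ε) : ℝ) / 2 ^ N :=
        div_le_of_le_mul₀ (by positivity) (by positivity) <| by
          rw [Nat.card_eq_fintype_card]
          exact sum_failureWeight_le (qprod p) (fun m => (qprod_pos hpos m).le) hq1 _
    _ < 2 ^ (N * (H4 p + ε) : ℝ) / 2 ^ N := by
        gcongr
        exact card_typFinset_lt hN hpos hsum ε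
    _ = 2 ^ ((N : ℝ) * (H4 p + ε - 1)) := by
        rw [← Real.rpow_natCast, ← Real.rpow_sub two_pos]
        ring_nf

/-- with `H(p) < 1` and `Δ > 0`, if a symplectic self-dual subspace
`C ⊆ F_2^{2N}` is chosen uniformly at random and
`F(C) = ∑_{m ∈ T(ε)} q_m · 1[∃ m' ≠ m, q_{m'} ≥ q_m ∧ m + m' ∈ C]`,
then for any `ε > 0`, `E[F(C)] < 2^{N(H(p)+ε−1)}`. -/
theorem stmt18 (N : ℕ) (p : F4 → ℝ) (hpos : ∀ x, 0 < p x) (hsum : ∑ x, p x = 1)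
    (hH : H4 p < 1) (hΔ : 0 < Δ4 p) (ε : ℝ) (hε : 0 < ε) :
    (∑ C : {C : Submodule (ZMod 2) (V N) // C = sympDual C},
        ∑ m ∈ typFinset N p ε,
          (if ∃ m', m' ≠ m ∧ qprod p m ≤ qprod p m' ∧ m + m' ∈ C.1
            then qprod p m else 0)) /
      (Nat.card {C : Submodule (ZMod 2) (V N) // C = sympDual C} : ℝ) <
      (2 : ℝ) ^ ((N : ℝ) * (H4 p + ε - 1)) :=
  stmt18_general N p hpos hsum ε
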